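/- The Cauchy density p(x,γ) = (1/(πγ))·1/((x/γ)² + 1), γ > 0, has infinite second moment: ∫_ℝ x² p(x,γ) dx = +∞; consequently, for γ₁ ≠ γ₂ the Wasserstein-2 distance between p(·,γ₁) and p(·,γ₂) is infinite, while D_{T,α}(p(·,γ₁)‖p(·,γ₂)) = (1/α²)((γ₁/γ₂)^α − α log(γ₁/γ₂) − 1) is finite. -/

import Mathlib

open Real MeasureTheory

/-- The Cauchy density with scale parameter `γ`. -/
noncomputable def cauchyDensity (γ x : ℝ) : ℝ := (1 / (Real.pi * γ)) * (1 / ((x / γ) ^ 2 + 1))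

/-- The quantile function of the standard Cauchy distribution. -/
noncomputable def cauchyQuantile (u : ℝ) : ℝ := Real.tan (Real.pi * (u - 1 / 2))

/-- The transport alpha function `f_{T,α}` for `α ≠ 0`. -/
noncomputable def fT (α z : ℝ) : ℝ := (1 / α ^ 2) * (z ^ α - α * Real.log z - 1)

/-!
For `x ≥ γ` the integrand `x² p(x, γ)` is at least `γ / (2π)`, so the second moment is
infinite. The quantile `Q(u) = tan (π (u - 1/2))` maps `(0, 1)` bijectively onto `ℝ` with
`Q' = π (1 + Q²) = 1 / p(Q, 1)`, so it pushes Lebesgue measure on `(0, 1)` to the standard Cauchy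
law. Hence `∫₀¹ ((γ₁ - γ₂) Q)² = (γ₁ - γ₂)² ∫ x² p(x, 1) dx = ∞`, while `(γ₁ Q)' / (γ₂ Q)'` is the
constant `γ₁ / γ₂`, so the transport divergence is `f_{T,α}(γ₁ / γ₂)`.
-/

open Set

theorem lintegral_ofReal_eq_top_of_le {α : Type*} [MeasurableSpace α] {μ : Measure α}
    {f : α → ℝ} {s : Set α} {c : ℝ} (hs : MeasurableSet s) (hμs : μ s = ⊤) (hc : 0 < c)
    (hf : ∀ x ∈ s, c ≤ f x) : ∫⁻ x, ENNReal.ofReal (f x) ∂μ = ⊤ := by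
  refine eq_top_iff.2 ?_
  calc ⊤ = ENNReal.ofReal c * μ s := by rw [hμs, ENNReal.mul_top (ENNReal.ofReal_pos.2 hc).ne']
    _ = ∫⁻ x, s.indicator (fun _ => ENNReal.ofReal c) x ∂μ := (lintegral_indicator_const hs _).symm
    _ ≤ ∫⁻ x, ENNReal.ofReal (f x) ∂μ := lintegral_mono fun x => by
      by_cases hx : x ∈ s
      · simpa [hx] using ENNReal.ofReal_le_ofReal (hf x hx)
      · simp [hx]

theorem sq_mul_cauchyDensity {γ : ℝ} (hγ : γ ≠ 0) (x : ℝ) :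
    x ^ 2 * cauchyDensity γ x = γ / π * (x ^ 2 / (x ^ 2 + γ ^ 2)) := by
  unfold cauchyDensity
  field_simp

theorem div_le_sq_mul_cauchyDensity {γ x : ℝ} (hγ : 0 < γ) (hx : γ ≤ x) :
    γ / (2 * π) ≤ x ^ 2 * cauchyDensity γ x := by
  have hhalf : 1 / 2 ≤ x ^ 2 / (x ^ 2 + γ ^ 2) := by
    rw [div_le_div_iff₀ two_pos (by positivity)]
    nlinarith
  calc γ / (2 * π) = γ / π * (1 / 2) := by field_simp
    _ ≤ γ / π * (x ^ 2 / (x ^ 2 + γ ^ 2)) := by gcongr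
    _ = x ^ 2 * cauchyDensity γ x := (sq_mul_cauchyDensity hγ.ne' x).symm

theorem lintegral_sq_mul_cauchyDensity_eq_top {γ : ℝ} (hγ : 0 < γ) :
    ∫⁻ x, ENNReal.ofReal (x ^ 2 * cauchyDensity γ x) = ⊤ :=
  lintegral_ofReal_eq_top_of_le measurableSet_Ici volume_Ici (by positivity)
    fun _ hx => div_le_sq_mul_cauchyDensity hγ hx

theorem pi_mul_sub_half_mem_Ioo {u : ℝ} (hu : u ∈ Ioo (0 : ℝ) 1) :
    π * (u - 1 / 2) ∈ Ioo (-(π / 2)) (π / 2) := by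
  obtain ⟨h₀, h₁⟩ := hu
  constructor <;> nlinarith [pi_pos]

theorem hasDerivAt_cauchyQuantile {u : ℝ} (hu : u ∈ Ioo (0 : ℝ) 1) :
    HasDerivAt cauchyQuantile (π * (1 + cauchyQuantile u ^ 2)) u := by
  have hcos : cos (π * (u - 1 / 2)) ≠ 0 := (cos_pos_of_mem_Ioo (pi_mul_sub_half_mem_Ioo hu)).ne'
  have hlin : HasDerivAt (fun v : ℝ => π * (v - 1 / 2)) π u := by
    simpa using ((hasDerivAt_id u).sub_const (1 / 2 : ℝ)).const_mul π
  refine ((hasDerivAt_tan hcos).comp u hlin).congr_deriv ?_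
  rw [cauchyQuantile, ← inv_one_add_tan_sq hcos, one_div, inv_inv, mul_comm]

theorem injOn_cauchyQuantile : InjOn cauchyQuantile (Ioo 0 1) := fun u hu v hv huv => by
  have := injOn_tan (pi_mul_sub_half_mem_Ioo hu) (pi_mul_sub_half_mem_Ioo hv) huv
  nlinarith [pi_pos]

theorem cauchyQuantile_image_Ioo : cauchyQuantile '' Ioo 0 1 = univ := by
  refine eq_univ_of_forall fun x => ⟨arctan x / π + 1 / 2, ?_, ?_⟩
  · obtain ⟨hlo, hhi⟩ := arctan_mem_Ioo x
    have hlo' : -(1 / 2) < arctan x / π := by rw [lt_div_iff₀ pi_pos]; linarith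
    have hhi' : arctan x / π < 1 / 2 := by rw [div_lt_iff₀ pi_pos]; linarith
    constructor <;> linarith
  · simp [cauchyQuantile, mul_div_cancel₀ _ pi_ne_zero, tan_arctan]

theorem pi_mul_one_add_sq_mul_cauchyDensity_one (x : ℝ) :
    π * (1 + x ^ 2) * cauchyDensity 1 x = 1 := by
  unfold cauchyDensity
  field_simp
  ring

theorem setLIntegral_comp_cauchyQuantile (g : ℝ → ENNReal) :
    ∫⁻ u in Ioo 0 1, g (cauchyQuantile u) =
      ∫⁻ x, ENNReal.ofReal (cauchyDensity 1 x) * g x := by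
  symm
  rw [← setLIntegral_univ, ← cauchyQuantile_image_Ioo,
    lintegral_image_eq_lintegral_abs_deriv_mul measurableSet_Ioo
      (fun u hu => (hasDerivAt_cauchyQuantile hu).hasDerivWithinAt) injOn_cauchyQuantile]
  refine setLIntegral_congr_fun measurableSet_Ioo fun u _ => ?_
  rw [← mul_assoc, ← ENNReal.ofReal_mul (abs_nonneg _), abs_of_pos (by positivity),
    pi_mul_one_add_sq_mul_cauchyDensity_one, ENNReal.ofReal_one, one_mul]

theorem setLIntegral_sq_cauchyQuantile_eq_top :
    ∫⁻ u in Ioo (0 : ℝ) 1, ENNReal.ofReal (cauchyQuantile u ^ 2) = ⊤ := by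
  rw [setLIntegral_comp_cauchyQuantile (fun x => ENNReal.ofReal (x ^ 2))]
  simp_rw [← ENNReal.ofReal_mul' (sq_nonneg _), mul_comm (cauchyDensity 1 _)]
  exact lintegral_sq_mul_cauchyDensity_eq_top one_pos

theorem deriv_const_mul_div_deriv_const_mul {Q : ℝ → ℝ} {q u : ℝ} (hQ : HasDerivAt Q q u)
    (hq : q ≠ 0) (a b : ℝ) :
    deriv (fun v => a * Q v) u / deriv (fun v => b * Q v) u = a / b := by
  rw [(hQ.const_mul a).deriv, (hQ.const_mul b).deriv, mul_div_mul_right _ _ hq]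

theorem cauchy_transport_alpha_general (γ γ₁ γ₂ α : ℝ) (hγ : 0 < γ)
    (hne : γ₁ ≠ γ₂) :
    (∫⁻ x, ENNReal.ofReal (x ^ 2 * cauchyDensity γ x) = ⊤) ∧
    (∫⁻ u in Set.Ioo (0 : ℝ) 1,
        ENNReal.ofReal ((γ₁ * cauchyQuantile u - γ₂ * cauchyQuantile u) ^ 2) = ⊤) ∧
    (∫ u in Set.Ioo (0 : ℝ) 1,
        fT α (deriv (fun v => γ₁ * cauchyQuantile v) u /
              deriv (fun v => γ₂ * cauchyQuantile v) u))
      = (1 / α ^ 2) * ((γ₁ / γ₂) ^ α - α * Real.log (γ₁ / γ₂) - 1) := by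
  refine ⟨lintegral_sq_mul_cauchyDensity_eq_top hγ, ?_, ?_⟩
  · have hc : (0 : ℝ) < (γ₁ - γ₂) ^ 2 := sq_pos_of_ne_zero (sub_ne_zero.2 hne)
    simp_rw [← sub_mul, mul_pow, ENNReal.ofReal_mul hc.le]
    rw [lintegral_const_mul' _ _ ENNReal.ofReal_ne_top, setLIntegral_sq_cauchyQuantile_eq_top,
      ENNReal.mul_top (ENNReal.ofReal_pos.2 hc).ne']
  · rw [setIntegral_congr_fun measurableSet_Ioo fun u hu => congrArg (fT α)
      (deriv_const_mul_div_deriv_const_mul (hasDerivAt_cauchyQuantile hu) (by positivity) γ₁ γ₂),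
      setIntegral_const, volume_real_Ioo_of_le zero_le_one, sub_zero, one_smul, fT]

theorem cauchy_transport_alpha (γ γ₁ γ₂ α : ℝ) (hγ : 0 < γ)
    (h₁ : 0 < γ₁) (h₂ : 0 < γ₂) (hne : γ₁ ≠ γ₂) (hα : α ≠ 0) :
    (∫⁻ x, ENNReal.ofReal (x ^ 2 * cauchyDensity γ x) = ⊤) ∧
    (∫⁻ u in Set.Ioo (0 : ℝ) 1,
        ENNReal.ofReal ((γ₁ * cauchyQuantile u - γ₂ * cauchyQuantile u) ^ 2) = ⊤) ∧
    (∫ u in Set.Ioo (0 : ℝ) 1,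
        fT α (deriv (fun v => γ₁ * cauchyQuantile v) u /
              deriv (fun v => γ₂ * cauchyQuantile v) u))
      = (1 / α ^ 2) * ((γ₁ / γ₂) ^ α - α * Real.log (γ₁ / γ₂) - 1) :=
  cauchy_transport_alpha_general γ γ₁ γ₂ α hγ hne
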